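/- Let Λ be a finite simple graph with vertices v_1, …, v_n and n ≥ 3, and let Γ(Λ) be the graph of the explicit construction. Then for every vertex v_i of Λ, the induced subgraph Γ(Λ) − st(v_i) has exactly two connected components, one of which has vertex set {a_1, a_2}. -/

import Mathlib

open SimpleGraph
open scoped commutatorElement

/-- The set of commutator relations defining the right-angled Artin group of a graph. -/
def raagRels {V : Type} (G : SimpleGraph V) : Set (FreeGroup V) :=
  {r | ∃ v w : V, G.Adj v w ∧ r = ⁅FreeGroup.of v, FreeGroup.of w⁆}

/-- The right-angled Artin group of a graph `G`. -/
abbrev RAAG {V : Type} (G : SimpleGraph V) : Type := PresentedGroup (raagRels G)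

/-- The subgroup of inner automorphisms of a group. -/
def Inn (G : Type*) [Group G] : Subgroup (MulAut G) := (MulAut.conj (G := G)).range

instance Inn.normal (G : Type*) [Group G] : (Inn G).Normal := by
  constructor
  intro x hx φ
  obtain ⟨g, rfl⟩ := hx
  refine ⟨φ g, ?_⟩
  ext h
  simp [MulAut.conj, mul_assoc]

/-- The outer automorphism group of a group. -/
abbrev Out (G : Type*) [Group G] : Type _ := MulAut G ⧸ Inn G

/-- The group of pure symmetric automorphisms of the right-angled Artin group of `G`:
those automorphisms sending each generator to a conjugate of itself. -/
def PSA {V : Type} (G : SimpleGraph V) : Subgroup (MulAut (RAAG G)) where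
  carrier := {φ | ∀ v : V,
    IsConj (PresentedGroup.of (rels := raagRels G) v) (φ (PresentedGroup.of v))}
  one_mem' := fun _ => IsConj.refl _
  mul_mem' := by
    intro φ ψ hφ hψ v
    rw [MulAut.mul_apply]
    exact (hφ v).trans (φ.toMonoidHom.map_isConj (hψ v))
  inv_mem' := by
    intro φ hφ v
    have h := (φ⁻¹ : MulAut (RAAG G)).toMonoidHom.map_isConj (hφ v)
    simp only [MulEquiv.coe_toMonoidHom] at h
    have h2 : (φ⁻¹ : MulAut (RAAG G)) (φ (PresentedGroup.of v)) = PresentedGroup.of v := by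
      simp
    rw [h2] at h
    exact h.symm

/-- The group of pure symmetric outer automorphisms: the image of `PSA` in `Out`. -/
def PSO {V : Type} (G : SimpleGraph V) : Subgroup (Out (RAAG G)) :=
  (PSA G).map (QuotientGroup.mk' (Inn (RAAG G)))

/-- The star of a vertex: the vertex together with its neighbours. -/
def graphStar {V : Type} (G : SimpleGraph V) (v : V) : Set V := insert v (G.neighborSet v)

/-- `IsCompOf G s A` says that `A` is the vertex set of a connected component of the
induced subgraph of `G` on `s`. -/
def IsCompOf {V : Type} (G : SimpleGraph V) (s : Set V) (A : Set V) : Prop :=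
  ∃ a : s, A = {x : V | ∃ hx : x ∈ s, (SimpleGraph.induce s G).Reachable ⟨x, hx⟩ a}

/-- The support graph of `G` at a vertex `v`: vertices are the connected components of
`G - st(v)`, and two distinct components `A`, `B` are adjacent if there is `b ∈ B` such
that `A` is also a connected component of `G - st(b)`, or symmetrically. -/
def SupportGraph {V : Type} (G : SimpleGraph V) (v : V) :
    SimpleGraph {A : Set V // IsCompOf G (graphStar G v)ᶜ A} :=
  SimpleGraph.fromRel (fun A B => ∃ b ∈ B.1, IsCompOf G (graphStar G b)ᶜ A.1)

/-- A pair of distinct non-adjacent vertices `(v, w)` is a separating intersection of links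
if `G - (lk(v) ∩ lk(w))` has a connected component containing neither `v` nor `w`. -/
def SILPair {V : Type} (G : SimpleGraph V) (v w : V) : Prop :=
  v ≠ w ∧ ¬ G.Adj v w ∧
    ∃ A : Set V, IsCompOf G (G.neighborSet v ∩ G.neighborSet w)ᶜ A ∧ v ∉ A ∧ w ∉ A
/-- Vertices of the graph `Γ(Λ)`: the vertices of `Λ` (indexed by `Fin n`, with `v i`
denoting `v_{i+1}`) together with new vertices `a₁, a₂, b₁, b₂, c₁, …, c_n, d₁, d₂`. -/
inductive GV (n : ℕ) : Type where
  | v (i : Fin n)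
  | a1 | a2 | b1 | b2
  | c (i : Fin n)
  | d1 | d2
deriving DecidableEq

/-- The edge relation of the graph `Γ(Λ)` (to be symmetrized by `SimpleGraph.fromRel`). -/
def gammaRel {n : ℕ} (Λ : SimpleGraph (Fin n)) : GV n → GV n → Prop
  | .v i, .v j => Λ.Adj i j
  | .c i, .v j => j = i ∨ (j : ℕ) = ((i : ℕ) + 1) % n
  | .c _, .d1 => True
  | .c _, .d2 => True
  | .d1, .v j => (j : ℕ) = 0
  | .d1, .b1 => True
  | .d2, .v j => (j : ℕ) ≠ 0
  | .d2, .b2 => True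
  | .v _, .b1 => True
  | .v _, .b2 => True
  | .b1, .a1 => True
  | .b2, .a2 => True
  | .a1, .a2 => True
  | _, _ => False

/-- The graph `Γ(Λ)` of the explicit construction. -/
def GammaGraph {n : ℕ} (Λ : SimpleGraph (Fin n)) : SimpleGraph (GV n) :=
  SimpleGraph.fromRel (gammaRel Λ)

/-- Vertices of the graph `Γ'(Λ)`: the vertices of `Λ` (indexed by `Fin n`, with `v i`
denoting `v_{i+1}`) together with new vertices
`a₁, a₂, a₃, b₁, b₂, b₃, c₁, …, c_n, d₁, d₂, d₃`. -/
inductive GV' (n : ℕ) : Type where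
  | v (i : Fin n)
  | a1 | a2 | a3 | b1 | b2 | b3
  | c (i : Fin n)
  | d1 | d2 | d3
deriving DecidableEq

/-- The edge relation of the graph `Γ'(Λ)` (to be symmetrized by `SimpleGraph.fromRel`). -/
def gammaRel' {n : ℕ} (Λ : SimpleGraph (Fin n)) : GV' n → GV' n → Prop
  | .v i, .v j => Λ.Adj i j
  | .c i, .v j => j = i ∨ (j : ℕ) = ((i : ℕ) + 1) % n
  | .c _, .d1 => True
  | .c _, .d2 => True
  | .c _, .d3 => True
  | .d1, .v j => (j : ℕ) = 0
  | .d1, .b1 => True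
  | .d2, .v j => (j : ℕ) = 1
  | .d3, .v j => 2 ≤ (j : ℕ)
  | .d3, .b3 => True
  | .d2, .d3 => True
  | .v _, .b1 => True
  | .v _, .b2 => True
  | .v _, .b3 => True
  | .b1, .a1 => True
  | .b2, .a2 => True
  | .b3, .a3 => True
  | .a1, .a2 => True
  | .a1, .a3 => True
  | .a2, .a3 => True
  | _, _ => False

/-- The graph `Γ'(Λ)` of the second explicit construction. -/
def GammaGraph' {n : ℕ} (Λ : SimpleGraph (Fin n)) : SimpleGraph (GV' n) :=
  SimpleGraph.fromRel (gammaRel' Λ)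

/-! The star of `vᵢ` contains `b₁`, `b₂`, which are the only neighbours of the edge `a₁a₂` outside
it, so `{a₁, a₂}` is a component of `Γ(Λ) - st(vᵢ)`. Everything else that survives is joined to the
one of `d₁, d₂` not adjacent to `vᵢ`: each surviving `cₖ` directly, and each surviving `vⱼ` through
one of `c_{j-1}, c_j`, since for `n ≥ 3` the star of `vᵢ` contains only `c_{i-1}` and `cᵢ`. -/

section InducedComponent

variable {V : Type} {G : SimpleGraph V} {s : Set V}

lemma mem_compl_graphStar {v x : V} : x ∈ (graphStar G v)ᶜ ↔ x ≠ v ∧ ¬G.Adj v x := by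
  simp [graphStar, not_or]

def inducedComp (G : SimpleGraph V) (s : Set V) (a : s) : Set V :=
  {x | ∃ hx : x ∈ s, (G.induce s).Reachable ⟨x, hx⟩ a}

lemma inducedComp_eq_of_reachable {a b : s} (h : (G.induce s).Reachable a b) :
    inducedComp G s a = inducedComp G s b := by
  ext x
  exact ⟨fun ⟨hx, hr⟩ => ⟨hx, hr.trans h⟩, fun ⟨hx, hr⟩ => ⟨hx, hr.trans h.symm⟩⟩

lemma mem_inducedComp_self (a : s) : a.1 ∈ inducedComp G s a := ⟨a.2, .rfl⟩

lemma inducedComp_eq_pair {p q : V} (hp : p ∈ s) (hq : q ∈ s) (hpq : G.Adj p q)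
    (hclosed : (G.neighborSet p ∪ G.neighborSet q) ∩ s ⊆ {p, q}) :
    inducedComp G s ⟨p, hp⟩ = {p, q} := by
  ext x
  constructor
  · rintro ⟨hx, ⟨w⟩⟩
    by_contra hxpq
    obtain ⟨⟨⟨y, z⟩, hyz⟩, -, hy, hz⟩ :=
      w.reverse.exists_boundary_dart {y : s | y.1 = p ∨ y.1 = q} (Or.inl rfl) hxpq
    exact hz (hclosed ⟨hy.elim (fun h => Or.inl (h ▸ hyz)) (fun h => Or.inr (h ▸ hyz)), z.2⟩)
  · rintro (rfl | rfl)
    · exact mem_inducedComp_self _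
    · exact ⟨hq, (G.induce_adj.mpr hpq).symm.reachable⟩

theorem exists_isCompOf_pair_and_one_more {p q r : V} (hp : p ∈ s) (hq : q ∈ s) (hr : r ∈ s)
    (hpq : G.Adj p q) (hclosed : (G.neighborSet p ∪ G.neighborSet q) ∩ s ⊆ {p, q})
    (hrp : r ≠ p) (hrq : r ≠ q)
    (hreach : ∀ x (hx : x ∈ s), x ≠ p → x ≠ q → (G.induce s).Reachable ⟨x, hx⟩ ⟨r, hr⟩) :
    ∃ A B : Set V, A ≠ B ∧ IsCompOf G s A ∧ IsCompOf G s B ∧ A = {p, q} ∧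
      ∀ C : Set V, IsCompOf G s C → C = A ∨ C = B := by
  have hA := inducedComp_eq_pair hp hq hpq hclosed
  refine ⟨inducedComp G s ⟨p, hp⟩, inducedComp G s ⟨r, hr⟩, fun hAB => ?_, ⟨_, rfl⟩, ⟨_, rfl⟩,
    hA, ?_⟩
  · have hmem := mem_inducedComp_self (G := G) ⟨r, hr⟩
    rw [← hAB, hA] at hmem
    exact hmem.elim hrp hrq
  · rintro C ⟨a, rfl⟩
    by_cases ha : a.1 = p ∨ a.1 = q
    · refine .inl (inducedComp_eq_of_reachable ?_)
      rcases ha with ha | ha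
      · obtain rfl : a = ⟨p, hp⟩ := Subtype.ext ha
        rfl
      · obtain rfl : a = ⟨q, hq⟩ := Subtype.ext ha
        exact (G.induce_adj.mpr hpq).symm.reachable
    · push Not at ha
      exact .inr (inducedComp_eq_of_reachable (hreach a.1 a.2 ha.1 ha.2))

end InducedComponent

lemma Fin.one_add_one_ne_zero {n : ℕ} [NeZero n] (hn : 3 ≤ n) : (1 + 1 : Fin n) ≠ 0 := by
  rw [Ne, Fin.ext_iff, Fin.val_add, Fin.val_one', Fin.val_zero, Nat.one_mod_eq_one.mpr (by omega),
    Nat.mod_eq_of_lt (by omega)]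
  omega

lemma Fin.exists_cycle_edge_avoiding {n : ℕ} [NeZero n] (hn : 3 ≤ n) {i j : Fin n} (hji : j ≠ i) :
    ∃ k : Fin n, (j = k ∨ j = k + 1) ∧ k ≠ i ∧ k + 1 ≠ i := by
  by_cases hi : j + 1 = i
  · refine ⟨j - 1, .inr (sub_add_cancel j 1).symm, ?_, by rwa [sub_add_cancel]⟩
    rw [← hi, Ne, sub_eq_iff_eq_add, add_assoc, left_eq_add]
    exact Fin.one_add_one_ne_zero hn
  · exact ⟨j, .inl rfl, hji, hi⟩

section GammaGraph

variable {n : ℕ} {Λ : SimpleGraph (Fin n)}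

lemma gammaGraph_adj {x y : GV n} :
    (GammaGraph Λ).Adj x y ↔ x ≠ y ∧ (gammaRel Λ x y ∨ gammaRel Λ y x) :=
  fromRel_adj ..

lemma gammaGraph_adj_a1_a2 : (GammaGraph Λ).Adj .a1 .a2 := by
  simp [gammaGraph_adj, gammaRel]

lemma gammaGraph_adj_v_b1 (i : Fin n) : (GammaGraph Λ).Adj (.v i) .b1 := by
  simp [gammaGraph_adj, gammaRel]

lemma gammaGraph_adj_v_b2 (i : Fin n) : (GammaGraph Λ).Adj (.v i) .b2 := by
  simp [gammaGraph_adj, gammaRel]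

lemma gammaGraph_neighborSet_a1_union_a2 :
    (GammaGraph Λ).neighborSet .a1 ∪ (GammaGraph Λ).neighborSet .a2 = {.a1, .a2, .b1, .b2} := by
  ext x
  cases x <;> simp [gammaGraph_adj, gammaRel]

lemma gammaGraph_adj_c_v [NeZero n] {k j : Fin n} :
    (GammaGraph Λ).Adj (.c k) (.v j) ↔ j = k ∨ j = k + 1 := by
  simp [gammaGraph_adj, gammaRel, Fin.ext_iff, Fin.val_add]

lemma gammaGraph_adj_v_d1 {i : Fin n} : (GammaGraph Λ).Adj (.v i) .d1 ↔ (i : ℕ) = 0 := by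
  simp [gammaGraph_adj, gammaRel]

lemma gammaGraph_adj_v_d2 {i : Fin n} : (GammaGraph Λ).Adj (.v i) .d2 ↔ (i : ℕ) ≠ 0 := by
  simp [gammaGraph_adj, gammaRel]

def farD (i : Fin n) : GV n := if (i : ℕ) = 0 then .d2 else .d1

lemma gammaGraph_adj_c_farD (k i : Fin n) : (GammaGraph Λ).Adj (.c k) (farD i) := by
  unfold farD; split_ifs <;> simp [gammaGraph_adj, gammaRel]

lemma gammaGraph_not_adj_v_farD (i : Fin n) : ¬(GammaGraph Λ).Adj (.v i) (farD i) := by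
  unfold farD; split_ifs <;> simp [gammaGraph_adj_v_d1, gammaGraph_adj_v_d2, *]

variable (Λ) (i : Fin n)

lemma farD_mem_compl_graphStar : farD i ∈ (graphStar (GammaGraph Λ) (.v i))ᶜ :=
  mem_compl_graphStar.mpr ⟨by unfold farD; split_ifs <;> simp, gammaGraph_not_adj_v_farD i⟩

lemma a1_mem_compl_graphStar : .a1 ∈ (graphStar (GammaGraph Λ) (.v i))ᶜ :=
  mem_compl_graphStar.mpr (by simp [gammaGraph_adj, gammaRel])

lemma a2_mem_compl_graphStar : .a2 ∈ (graphStar (GammaGraph Λ) (.v i))ᶜ :=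
  mem_compl_graphStar.mpr (by simp [gammaGraph_adj, gammaRel])

lemma gammaGraph_neighborSet_a1_union_a2_inter_compl_graphStar :
    ((GammaGraph Λ).neighborSet .a1 ∪ (GammaGraph Λ).neighborSet .a2) ∩
      (graphStar (GammaGraph Λ) (.v i))ᶜ ⊆ {.a1, .a2} := by
  rintro x ⟨hx, hxs⟩
  rw [gammaGraph_neighborSet_a1_union_a2] at hx
  rcases hx with rfl | rfl | rfl | rfl
  · exact .inl rfl
  · exact .inr rfl
  · exact absurd (gammaGraph_adj_v_b1 i) (mem_compl_graphStar.mp hxs).2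
  · exact absurd (gammaGraph_adj_v_b2 i) (mem_compl_graphStar.mp hxs).2

lemma c_mem_compl_graphStar [NeZero n] {k : Fin n} (hk : k ≠ i) (hk' : k + 1 ≠ i) :
    .c k ∈ (graphStar (GammaGraph Λ) (.v i))ᶜ := by
  rw [mem_compl_graphStar, adj_comm, gammaGraph_adj_c_v]
  exact ⟨by simp, by tauto⟩

lemma gammaGraph_reachable_farD [NeZero n] (hn : 3 ≤ n) (x : GV n)
    (hx : x ∈ (graphStar (GammaGraph Λ) (.v i))ᶜ) (hx1 : x ≠ .a1) (hx2 : x ≠ .a2) :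
    ((GammaGraph Λ).induce (graphStar (GammaGraph Λ) (.v i))ᶜ).Reachable ⟨x, hx⟩
      ⟨farD i, farD_mem_compl_graphStar Λ i⟩ := by
  have hc : ∀ k (hk : GV.c k ∈ (graphStar (GammaGraph Λ) (.v i))ᶜ),
      ((GammaGraph Λ).induce _).Reachable ⟨.c k, hk⟩ ⟨farD i, farD_mem_compl_graphStar Λ i⟩ :=
    fun k _ => (induce_adj.mpr (gammaGraph_adj_c_farD k i)).reachable
  obtain ⟨hxi, hxadj⟩ := mem_compl_graphStar.mp hx
  cases x with
  | v j =>
    obtain ⟨k, hjk, hki, hk'i⟩ :=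
      Fin.exists_cycle_edge_avoiding hn (fun h => hxi (congrArg GV.v h))
    have hks := c_mem_compl_graphStar Λ i hki hk'i
    exact (induce_adj.mpr (gammaGraph_adj_c_v.mpr hjk).symm).reachable.trans (hc k hks)
  | c k => exact hc k hx
  | d1 =>
    have : (i : ℕ) ≠ 0 := fun h => hxadj (gammaGraph_adj_v_d1.mpr h)
    simp only [farD, this, if_false]
    rfl
  | d2 =>
    have : (i : ℕ) = 0 := not_not.mp fun h => hxadj (gammaGraph_adj_v_d2.mpr h)
    simp only [farD, this, if_true]
    rfl
  | a1 => exact absurd rfl hx1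
  | a2 => exact absurd rfl hx2
  | b1 => exact absurd (gammaGraph_adj_v_b1 i) hxadj
  | b2 => exact absurd (gammaGraph_adj_v_b2 i) hxadj

end GammaGraph

/-- For every vertex `v_i` of `Λ`, the graph `Γ(Λ) - st(v_i)` has exactly
two connected components, one of which has vertex set `{a₁, a₂}`. -/
theorem gammaGraph_minus_star_two_components
    (n : ℕ) (hn : 3 ≤ n) (Λ : SimpleGraph (Fin n)) (i : Fin n) :
    ∃ A B : Set (GV n), A ≠ B ∧
      IsCompOf (GammaGraph Λ) (graphStar (GammaGraph Λ) (GV.v i))ᶜ A ∧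
      IsCompOf (GammaGraph Λ) (graphStar (GammaGraph Λ) (GV.v i))ᶜ B ∧
      A = {GV.a1, GV.a2} ∧
      (∀ C : Set (GV n),
        IsCompOf (GammaGraph Λ) (graphStar (GammaGraph Λ) (GV.v i))ᶜ C → C = A ∨ C = B) := by
  have : NeZero n := ⟨by omega⟩
  have hfar : farD i ≠ GV.a1 ∧ farD i ≠ GV.a2 := by unfold farD; split_ifs <;> simp
  exact exists_isCompOf_pair_and_one_more (a1_mem_compl_graphStar Λ i)
    (a2_mem_compl_graphStar Λ i) (farD_mem_compl_graphStar Λ i) gammaGraph_adj_a1_a2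
    (gammaGraph_neighborSet_a1_union_a2_inter_compl_graphStar Λ i) hfar.1 hfar.2
    (gammaGraph_reachable_farD Λ i hn)
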